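/- arXiv:2110.02487 — 3 statements merged into one kernel-verified Lean document; each statement's English description precedes it below -/
import Mathlib

section
/- Let G be a bipartite graph on n vertices and fix k ≥ 1. Define G_0 = G, and for i = 1,...,k let M_i be a maximum matching of G_{i-1} and G_i the graph obtained from G_{i-1} by deleting the edges of M_i. Let 𝓜_k = M_1 ∪ ... ∪ M_k and let I_k be a maximum independent set of G_k. Then |I_k| ≥ n − |𝓜_k| / k. -/
open scoped Classical

variable {V : Type*} [Fintype V] [DecidableEq V]

/-- A matching of `G`, given as a finite set of edges of `G` that are pairwise vertex-disjoint. -/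
def IsMatchingE (G : SimpleGraph V) (M : Finset (Sym2 V)) : Prop :=
  ↑M ⊆ G.edgeSet ∧ (M : Set (Sym2 V)).Pairwise fun e f => ∀ v, v ∈ e → v ∉ f

/-- A maximum-cardinality matching of `G`. -/
def IsMaxMatchingE (G : SimpleGraph V) (M : Finset (Sym2 V)) : Prop :=
  IsMatchingE G M ∧ ∀ M', IsMatchingE G M' → M'.card ≤ M.card

/-- An independent set of `G`. -/
def IsIndepF (G : SimpleGraph V) (S : Finset V) : Prop :=
  ∀ v ∈ S, ∀ w ∈ S, ¬G.Adj v w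

/-- A maximum-cardinality independent set of `G`. -/
def IsMaxIndepF (G : SimpleGraph V) (S : Finset V) : Prop :=
  IsIndepF G S ∧ ∀ S', IsIndepF G S' → S'.card ≤ S.card

/-- A `k`-dependent set: every vertex of the induced subgraph `G[S]` has degree at most `k`. -/
def KDepSet (G : SimpleGraph V) (k : ℕ) (S : Finset V) : Prop :=
  ∀ v ∈ S, (S.filter fun w => G.Adj v w).card ≤ k

/-- A maximum-cardinality `k`-dependent set of `G`. -/
def IsMaxKDep (G : SimpleGraph V) (k : ℕ) (S : Finset V) : Prop :=
  KDepSet G k S ∧ ∀ T, KDepSet G k T → T.card ≤ S.card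

/-- The edges of the induced subgraph `G[S]`. -/
noncomputable def inducedEdges (G : SimpleGraph V) (S : Finset V) : Finset (Sym2 V) :=
  G.edgeFinset.filter fun e => ∀ v ∈ e, v ∈ S

/-- The residual graph after deleting the matchings `M 0, ..., M (i-1)` from `G`. -/
def resid (G : SimpleGraph V) (M : ℕ → Finset (Sym2 V)) (i : ℕ) : SimpleGraph V :=
  G.deleteEdges (⋃ j ∈ Set.Iio i, (M j : Set (Sym2 V)))

/-- The accumulated set of deleted edges `M 0 ∪ ... ∪ M (k-1)`. -/
def accumM (M : ℕ → Finset (Sym2 V)) (k : ℕ) : Finset (Sym2 V) :=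
  (Finset.range k).biUnion M

set_option maxHeartbeats 800000 in
lemma konig_cover (H : SimpleGraph V) (hH : H.Colorable 2) :
    ∃ (M' : Finset (Sym2 V)) (C : Finset V), IsMatchingE H M' ∧ C.card ≤ M'.card ∧
      ∀ u w, H.Adj u w → u ∈ C ∨ w ∈ C := by
  classical
  obtain ⟨c⟩ := hH
  set A : Finset V := Finset.univ.filter (fun v => c v = 0) with hAdef
  set Nb : Finset V → Finset V :=
    fun S => Finset.univ.filter (fun b => ∃ a ∈ S, H.Adj a b) with hNbdef
  have hNbmem : ∀ (S : Finset V) (b : V), b ∈ Nb S ↔ ∃ a ∈ S, H.Adj a b := by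
    intro S b; simp [hNbdef]
  set d : ℕ := A.powerset.sup (fun S => S.card - (Nb S).card) with hddef
  have hdle : ∀ S ⊆ A, S.card - (Nb S).card ≤ d :=
    fun S hS => Finset.le_sup (f := fun S => S.card - (Nb S).card) (Finset.mem_powerset.2 hS)
  -- Hall's theorem setup
  set t : {x // x ∈ A} → Finset (V ⊕ Fin d) :=
    fun a => ((H.neighborFinset ↑a).image Sum.inl) ∪ (Finset.univ.image Sum.inr) with htdef
  have hall : ∀ s : Finset {x // x ∈ A}, s.card ≤ (s.biUnion t).card := by
    intro s
    rcases s.eq_empty_or_nonempty with rfl | hs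
    · simp
    set S : Finset V := s.image Subtype.val with hSdef
    have hScard : S.card = s.card :=
      Finset.card_image_of_injective _ Subtype.coe_injective
    have hSA : S ⊆ A := by
      intro v hv
      rw [hSdef, Finset.mem_image] at hv
      obtain ⟨a, _, rfl⟩ := hv
      exact a.2
    have h1 : (Nb S).image Sum.inl ⊆ s.biUnion t := by
      intro x hx
      rw [Finset.mem_image] at hx
      obtain ⟨b, hb, rfl⟩ := hx
      obtain ⟨a, haS, hadj⟩ := (hNbmem S b).1 hb
      rw [hSdef, Finset.mem_image] at haS
      obtain ⟨a', ha's, rfl⟩ := haS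
      refine Finset.mem_biUnion.2 ⟨a', ha's, ?_⟩
      simp [htdef, hadj]
    have h2 : (Finset.univ : Finset (Fin d)).image Sum.inr ⊆ s.biUnion t := by
      obtain ⟨a, ha⟩ := hs
      intro x hx
      refine Finset.mem_biUnion.2 ⟨a, ha, ?_⟩
      rw [Finset.mem_image] at hx
      obtain ⟨j, _, rfl⟩ := hx
      simp [htdef]
    have hdisj : Disjoint ((Nb S).image Sum.inl)
        ((Finset.univ : Finset (Fin d)).image Sum.inr) := by
      simp only [Finset.disjoint_left, Finset.mem_image]
      rintro x ⟨b, -, rfl⟩ ⟨j, -, h⟩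
      exact Sum.inl_ne_inr h.symm
    have hcard := Finset.card_le_card (Finset.union_subset h1 h2)
    rw [Finset.card_union_of_disjoint hdisj,
        Finset.card_image_of_injective _ Sum.inl_injective,
        Finset.card_image_of_injective _ Sum.inr_injective] at hcard
    have hd := hdle S hSA
    simp only [Finset.card_univ, Fintype.card_fin] at hcard
    omega
  obtain ⟨f, hfinj, hft⟩ := (Finset.all_card_le_biUnion_card_iff_exists_injective t).1 hall
  -- extract matched vertices
  set P : Finset {x // x ∈ A} := Finset.univ.filter (fun a => (f a).isLeft) with hPdef
  set bf : {x // x ∈ A} → V := fun a => Sum.elim id (fun _ => (a : V)) (f a) with hbfdef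
  have hbf : ∀ a ∈ P, f a = Sum.inl (bf a) ∧ H.Adj ↑a (bf a) := by
    intro a ha
    simp only [hPdef, Finset.mem_filter] at ha
    obtain ⟨b, hb⟩ := Sum.isLeft_iff.1 ha.2
    have hbfa : bf a = b := by simp [hbfdef, hb]
    have hfb := hft a
    rw [hb] at hfb
    simp only [htdef, Finset.mem_union, Finset.mem_image] at hfb
    rcases hfb with ⟨b', hb', heq⟩ | ⟨j, -, heq⟩
    · cases heq
      exact ⟨by rw [hb, hbfa], by rw [hbfa]; exact (H.mem_neighborFinset _ _).1 hb'⟩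
    · exact absurd heq (by simp)
  have hbfB : ∀ a ∈ P, bf a ∉ A := by
    intro a ha hbA
    have hadj := (hbf a ha).2
    have h1 : (a : V) ∈ A := a.2
    simp only [hAdef, Finset.mem_filter] at h1 hbA
    exact c.valid hadj (h1.2.trans hbA.2.symm)
  set M' : Finset (Sym2 V) := P.image (fun a => s(a.1, bf a)) with hM'def
  have hedginj : ∀ a : {x // x ∈ A}, a ∈ P → ∀ a' : {x // x ∈ A}, a' ∈ P →
      s(a.1, bf a) = s(a'.1, bf a') → a = a' := by
    intro a ha a' ha' heq
    rw [Sym2.eq_iff] at heq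
    rcases heq with ⟨h1, h2⟩ | ⟨h1, h2⟩
    · exact Subtype.ext h1
    · exact absurd (h1 ▸ a.2 : bf a' ∈ A) (hbfB a' ha')
  have hM'card : M'.card = P.card := by
    rw [hM'def]
    exact Finset.card_image_of_injOn (fun a ha a' ha' h => hedginj a ha a' ha' h)
  -- P.card >= A.card - d
  have hPcard : A.card ≤ P.card + d := by
    have hQim : (Finset.univ \ P).image f ⊆ (Finset.univ : Finset (Fin d)).image Sum.inr := by
      intro x hx
      rw [Finset.mem_image] at hx
      obtain ⟨a, ha, rfl⟩ := hx
      simp only [hPdef, Finset.mem_sdiff, Finset.mem_filter, Finset.mem_univ,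
        true_and] at ha
      rcases hf : f a with b | j
      · rw [hf] at ha; simp at ha
      · simp
    have hQcard : (Finset.univ \ P).card ≤ d := by
      have := Finset.card_le_card hQim
      rwa [Finset.card_image_of_injective _ hfinj,
        Finset.card_image_of_injective _ Sum.inr_injective, Finset.card_univ,
        Fintype.card_fin] at this
    have huniv : (Finset.univ : Finset {x // x ∈ A}).card = A.card := by simp
    have hsd := Finset.card_sdiff_add_card_eq_card (Finset.subset_univ P)
    omega
  -- choose the deficiency witness
  have hS0 : ∃ S0 ⊆ A, d + (Nb S0).card = S0.card := by
    rcases Nat.eq_zero_or_pos d with hd0 | hdpos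
    · refine ⟨∅, Finset.empty_subset _, ?_⟩
      have hNe : Nb ∅ = ∅ := by
        ext b; simp [hNbmem]
      simp [hNe, hd0]
    · obtain ⟨S0, hS0A, hS0⟩ := Finset.exists_mem_eq_sup A.powerset
        ⟨∅, Finset.mem_powerset.2 (Finset.empty_subset _)⟩ (fun S => S.card - (Nb S).card)
      rw [Finset.mem_powerset] at hS0A
      refine ⟨S0, hS0A, ?_⟩
      have hd : d = S0.card - (Nb S0).card := hS0
      omega
  obtain ⟨S0, hS0A, hS0card⟩ := hS0
  refine ⟨M', (A \ S0) ∪ Nb S0, ⟨?_, ?_⟩, ?_, ?_⟩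
  · -- edges of M' are in H
    intro e he
    rw [Finset.mem_coe, hM'def, Finset.mem_image] at he
    obtain ⟨a, ha, rfl⟩ := he
    exact (hbf a ha).2
  · -- pairwise disjoint
    intro e he f' hf' hne v hve hvf
    rw [Finset.mem_coe, hM'def, Finset.mem_image] at he hf'
    obtain ⟨a, ha, rfl⟩ := he
    obtain ⟨a', ha', rfl⟩ := hf'
    have hane : a ≠ a' := fun h => hne (by rw [h])
    simp only [Sym2.mem_iff] at hve hvf
    have haA : (a : V) ∈ A := a.2
    have ha'A : (a' : V) ∈ A := a'.2
    rcases hve with rfl | rfl <;> rcases hvf with h | h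
    · exact hane (Subtype.ext h)
    · exact hbfB a' ha' (h ▸ haA)
    · exact hbfB a ha (h.symm ▸ ha'A)
    · exact hane (hfinj (by rw [(hbf a ha).1, (hbf a' ha').1, h]))
  · -- cover cardinality
    have h1 : ((A \ S0) ∪ Nb S0).card ≤ (A \ S0).card + (Nb S0).card :=
      Finset.card_union_le _ _
    have h2 : (A \ S0).card = A.card - S0.card := Finset.card_sdiff_of_subset hS0A
    have h3 : S0.card ≤ A.card := Finset.card_le_card hS0A
    omega
  · -- cover property
    intro u w hadj
    have hcol : (c u : ℕ) ≠ (c w : ℕ) := fun h => c.valid hadj (Fin.ext h)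
    have hu2 : (c u : ℕ) < 2 := (c u).isLt
    have hw2 : (c w : ℕ) < 2 := (c w).isLt
    have huw : u ∈ A ∨ w ∈ A := by
      simp only [hAdef, Finset.mem_filter, Finset.mem_univ, true_and, Fin.ext_iff,
        Fin.val_zero]
      omega
    rcases huw with hu | hw
    · by_cases hus : u ∈ S0
      · exact Or.inr (Finset.mem_union_right _ ((hNbmem S0 w).2 ⟨u, hus, hadj⟩))
      · exact Or.inl (Finset.mem_union_left _ (Finset.mem_sdiff.2 ⟨hu, hus⟩))
    · by_cases hws : w ∈ S0
      · exact Or.inl (Finset.mem_union_right _ ((hNbmem S0 u).2 ⟨w, hws, hadj.symm⟩))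
      · exact Or.inr (Finset.mem_union_left _ (Finset.mem_sdiff.2 ⟨hw, hws⟩))

theorem stmt3 (G : SimpleGraph V) (hG : G.Colorable 2) (k : ℕ) (hk : 1 ≤ k)
    (M : ℕ → Finset (Sym2 V)) (hM : ∀ i < k, IsMaxMatchingE (resid G M i) (M i))
    (I : Finset V) (hI : IsMaxIndepF (resid G M k) I) :
    (I.card : ℝ) ≥ (Fintype.card V : ℝ) - (accumM M k).card / k := by
  classical
  have hHbip : (resid G M k).Colorable 2 :=
    hG.mono_left (SimpleGraph.deleteEdges_le _)
  obtain ⟨M', C, hM'match, hCM', hCcov⟩ := konig_cover (resid G M k) hHbip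
  have hindep : IsIndepF (resid G M k) (Finset.univ \ C) := by
    intro v hv w hw hadj
    rcases hCcov v w hadj with h | h
    · exact (Finset.mem_sdiff.1 hv).2 h
    · exact (Finset.mem_sdiff.1 hw).2 h
  have hIcard : Fintype.card V ≤ I.card + M'.card := by
    have h1 := hI.2 _ hindep
    have h2 : (Finset.univ \ C).card = Fintype.card V - C.card := by
      rw [Finset.card_sdiff_of_subset (Finset.subset_univ C), Finset.card_univ]
    have h3 : C.card ≤ Fintype.card V := by
      rw [← Finset.card_univ]; exact Finset.card_le_card (Finset.subset_univ C)
    omega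
  have hres : ∀ i ≤ k, resid G M k ≤ resid G M i := by
    intro i hik
    apply SimpleGraph.deleteEdges_anti
    exact Set.biUnion_subset_biUnion_left (Set.Iio_subset_Iio hik)
  have hM'le : ∀ i < k, M'.card ≤ (M i).card := by
    intro i hik
    refine (hM i hik).2 M' ⟨?_, hM'match.2⟩
    intro e he
    exact SimpleGraph.edgeSet_mono (hres i hik.le) (hM'match.1 he)
  have hdisj : ∀ i j, i < j → j < k → Disjoint (M i) (M j) := by
    intro i j hij hjk
    rw [Finset.disjoint_left]
    intro e hei hej
    have h1 := (hM j hjk).1.1 hej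
    rw [resid, SimpleGraph.edgeSet_deleteEdges] at h1
    exact h1.2 (Set.mem_biUnion (show i ∈ Set.Iio j from hij) hei)
  have hacc : (accumM M k).card = ∑ i ∈ Finset.range k, (M i).card := by
    rw [accumM]
    apply Finset.card_biUnion
    intro i hi j hj hij
    rcases lt_or_gt_of_ne hij with h | h
    · exact hdisj i j h (Finset.mem_range.1 hj)
    · exact (hdisj j i h (Finset.mem_range.1 hi)).symm
  have hsum : k * M'.card ≤ (accumM M k).card := by
    rw [hacc]
    calc k * M'.card = ∑ _i ∈ Finset.range k, M'.card := by
          rw [Finset.sum_const, Finset.card_range, smul_eq_mul]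
      _ ≤ ∑ i ∈ Finset.range k, (M i).card :=
          Finset.sum_le_sum fun i hi => hM'le i (Finset.mem_range.1 hi)
  have hk0 : (0:ℝ) < k := by exact_mod_cast hk
  have h1 : (M'.card : ℝ) ≤ (accumM M k).card / k := by
    rw [le_div_iff₀ hk0]
    calc (M'.card : ℝ) * k = ((k * M'.card : ℕ) : ℝ) := by push_cast; ring
      _ ≤ _ := by exact_mod_cast hsum
  have h2 : (Fintype.card V : ℝ) ≤ I.card + M'.card := by exact_mod_cast hIcard
  linarith
end

section
/- With the setup of the iterated matching-removal process on a bipartite graph G (removing k maximum matchings to form 𝓜_k and residual graph G_k), let I*_k be a maximum k-dependent set of G and E'_k the set of edges of G[I*_k] not contained in 𝓜_k. Then |𝓜_k| ≤ k·|I*_k|/2 − |E'_k| + k·|V \ I*_k|. -/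
open scoped Classical

variable {V : Type*} [Fintype V] [DecidableEq V]

/-!
The edges of `accumM M k` inside `G[S]`, together with `inducedEdges G S \ accumM M k`, are
the edges of `G[S]`, of which there are at most `k * #S / 2` by double counting. Every other edge
of `accumM M k` has an endpoint outside `S`, and a vertex lies in at most one edge of each
matching, hence in at most `k` of them.
-/

open Finset

namespace IsMatchingE

variable {G : SimpleGraph V} {M : Finset (Sym2 V)}

omit [Fintype V] in
theorem card_filter_mem_le_one (hM : IsMatchingE G M) (v : V) : #{e ∈ M | v ∈ e} ≤ 1 := by
  refine card_le_one.2 fun e he f hf => ?_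
  rw [mem_filter] at he hf
  by_contra hne
  exact hM.2 he.1 hf.1 hne v he.2 hf.2

end IsMatchingE

theorem accumM_subset_edgeFinset {G : SimpleGraph V} {M : ℕ → Finset (Sym2 V)} {k : ℕ}
    (hM : ∀ i < k, IsMatchingE (resid G M i) (M i)) : accumM M k ⊆ G.edgeFinset := by
  intro e he
  obtain ⟨i, hi, hei⟩ := mem_biUnion.1 he
  exact SimpleGraph.mem_edgeFinset.2 <|
    SimpleGraph.edgeSet_mono (G.deleteEdges_le _) ((hM i (mem_range.1 hi)).1 hei)

omit [Fintype V] in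
theorem card_filter_mem_accumM_le {M : ℕ → Finset (Sym2 V)} {k : ℕ}
    (hM : ∀ i < k, ∀ v, #{e ∈ M i | v ∈ e} ≤ 1) (v : V) : #{e ∈ accumM M k | v ∈ e} ≤ k := by
  calc #{e ∈ accumM M k | v ∈ e}
      = #((range k).biUnion fun i => {e ∈ M i | v ∈ e}) := by
        rw [accumM, filter_biUnion]
    _ ≤ ∑ i ∈ range k, #{e ∈ M i | v ∈ e} := card_biUnion_le
    _ ≤ ∑ _i ∈ range k, 1 := sum_le_sum fun i hi => hM i (mem_range.1 hi) v
    _ = k := by simp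

namespace KDepSet

variable {G : SimpleGraph V} {k : ℕ} {S : Finset V}

theorem card_filter_mem_inducedEdges_le (hS : KDepSet G k S) {v : V} (hv : v ∈ S) :
    #{e ∈ inducedEdges G S | v ∈ e} ≤ k := by
  have hsub : {e ∈ inducedEdges G S | v ∈ e} ⊆ {w ∈ S | G.Adj v w}.image (s(v, ·)) := by
    intro e he
    simp only [inducedEdges, mem_filter, SimpleGraph.mem_edgeFinset] at he
    obtain ⟨⟨hadj, hmemS⟩, hve⟩ := he
    obtain ⟨w, rfl⟩ := Sym2.mem_iff_exists.1 hve
    exact mem_image_of_mem _ (mem_filter.2 ⟨hmemS w (Sym2.mem_mk_right v w), hadj⟩)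
  exact (card_le_card hsub).trans (card_image_le.trans (hS v hv))

theorem two_mul_card_inducedEdges_le (hS : KDepSet G k S) :
    2 * #(inducedEdges G S) ≤ k * #S := by
  rw [mul_comm, mul_comm k]
  refine card_mul_le_card_mul (fun e v => v ∈ e) (fun e he => ?_)
    fun v hv => hS.card_filter_mem_inducedEdges_le hv
  simp only [inducedEdges, mem_filter, SimpleGraph.mem_edgeFinset] at he
  have hends : {v ∈ S | v ∈ e} = e.toFinset := by
    ext v
    simp only [mem_filter, Sym2.mem_toFinset, and_iff_right_iff_imp]
    exact he.2 v
  rw [bipartiteAbove, hends, Sym2.card_toFinset_of_not_isDiag e (G.not_isDiag_of_mem_edgeSet he.1)]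

end KDepSet

theorem card_sdiff_inducedEdges_le {G : SimpleGraph V} {F : Finset (Sym2 V)} {k : ℕ}
    (S : Finset V) (hF : F ⊆ G.edgeFinset) (hdeg : ∀ v, #{e ∈ F | v ∈ e} ≤ k) :
    #(F \ inducedEdges G S) ≤ k * #Sᶜ := by
  rw [← mul_one #(F \ _), mul_comm k]
  refine card_mul_le_card_mul (fun e v => v ∈ e) (fun e he => ?_)
    fun v _ => (card_le_card (filter_subset_filter _ sdiff_subset)).trans (hdeg v)
  obtain ⟨heF, heS⟩ := mem_sdiff.1 he
  obtain ⟨v, hve, hvS⟩ : ∃ v ∈ e, v ∉ S := by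
    by_contra! h
    exact heS (mem_filter.2 ⟨hF heF, h⟩)
  exact one_le_card.2 ⟨v, mem_filter.2 ⟨mem_compl.2 hvS, hve⟩⟩

theorem KDepSet.two_mul_card_add_card_inducedEdges_sdiff_le {G : SimpleGraph V} {k : ℕ}
    {S : Finset V} {F : Finset (Sym2 V)} (hS : KDepSet G k S) (hF : F ⊆ G.edgeFinset)
    (hdeg : ∀ v, #{e ∈ F | v ∈ e} ≤ k) :
    2 * (#F + #(inducedEdges G S \ F)) ≤ k * #S + 2 * (k * #Sᶜ) := by
  have hsplitF := card_inter_add_card_sdiff F (inducedEdges G S)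
  have hsplitE := card_inter_add_card_sdiff (inducedEdges G S) F
  have hinter : #(F ∩ inducedEdges G S) = #(inducedEdges G S ∩ F) := by rw [inter_comm]
  have hinduced := hS.two_mul_card_inducedEdges_le
  have houtside := card_sdiff_inducedEdges_le S hF hdeg
  lia

theorem stmt4_general (G : SimpleGraph V) (k : ℕ)
    (M : ℕ → Finset (Sym2 V)) (hM : ∀ i < k, IsMaxMatchingE (resid G M i) (M i))
    (Istar : Finset V) (hIstar : IsMaxKDep G k Istar) :
    ((accumM M k).card : ℝ) ≤
      k * Istar.card / 2 - ((inducedEdges G Istar) \ accumM M k).card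
        + k * (Istarᶜ).card := by
  have hsub := accumM_subset_edgeFinset fun i hi => (hM i hi).1
  have hdeg := card_filter_mem_accumM_le fun i hi => (hM i hi).1.card_filter_mem_le_one
  have hcount : (2 * (#(accumM M k) + #(inducedEdges G Istar \ accumM M k)) : ℝ) ≤
      k * #Istar + 2 * (k * #Istarᶜ) := by
    exact_mod_cast hIstar.1.two_mul_card_add_card_inducedEdges_sdiff_le hsub hdeg
  linarith

theorem stmt4 (G : SimpleGraph V) (hG : G.Colorable 2) (k : ℕ) (hk : 1 ≤ k)
    (M : ℕ → Finset (Sym2 V)) (hM : ∀ i < k, IsMaxMatchingE (resid G M i) (M i))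
    (Istar : Finset V) (hIstar : IsMaxKDep G k Istar) :
    ((accumM M k).card : ℝ) ≤
      k * Istar.card / 2 - ((inducedEdges G Istar) \ accumM M k).card
        + k * (Istarᶜ).card :=
  stmt4_general G k M hM Istar hIstar
end

section
/- With the iterated matching-removal setup on a bipartite graph G: the maximum independent set I_k of the residual graph G_k satisfies |I_k| ≥ (1/2 + 1/(2(k+1)))·|I*_k|, where I*_k is a maximum k-dependent set of G. -/
open scoped Classical

variable {V : Type*} [Fintype V] [DecidableEq V]

/-!
Write `S` for the maximum `k`-dependent set and `E'` for the edge set of `G_k[S]`. Deleting one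
endpoint of every edge of `E'` leaves an independent set of `G_k`, so `|S| ≤ |I_k| + |E'|`.

For `i < k`, König's theorem in the bipartite graph `G_i` gives `n ≤ |I_k| + |M_i|`, because
independent sets of `G_i` stay independent in `G_k`. Since `M_i` covers `2|M_i|` vertices and
matches at most `n - |S|` vertices of `S` to vertices outside `S`, at least `2|S| - 2|I_k|`
vertices of `S` are matched by `M_i` inside `S`. The `M_i` are pairwise disjoint and disjoint from
`E'`, and every vertex of `S` has at most `k` neighbours in `S`, so a vertex `v ∈ S` is matched
inside `S` by at most `k - deg_{E'} v` of them. Double counting gives `2|E'| + k|S| ≤ 2k|I_k|`,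
and adding twice the first bound gives `(k + 2)|S| ≤ 2(k + 1)|I_k|`.
-/

open Finset

theorem IsMatchingE.eq_of_mem_of_mem {α : Type*} {H : SimpleGraph α} {M : Finset (Sym2 α)}
    (hM : IsMatchingE H M) {e f : Sym2 α} (he : e ∈ M) (hf : f ∈ M) {v : α} (hve : v ∈ e)
    (hvf : v ∈ f) : e = f :=
  by_contra fun hne => hM.2 he hf hne v hve hvf

theorem IsIndepF.anti {α : Type*} {H H' : SimpleGraph α} {J : Finset α} (h : H ≤ H')
    (hJ : IsIndepF H' J) : IsIndepF H J :=
  fun v hv w hw hvw => hJ v hv w hw (h hvw)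

theorem isMatchingE_image_mk_of_injOn {α : Type*} [DecidableEq α] {H : SimpleGraph α}
    {P : Finset α} {f : α → α} (hf_inj : Set.InjOn f P) (hf_out : ∀ x ∈ P, f x ∉ P)
    (hf_adj : ∀ x ∈ P, H.Adj x (f x)) :
    IsMatchingE H (P.image fun x => s(x, f x)) := by
  refine ⟨fun e he => ?_, fun e he e' he' hne v hv hv' => ?_⟩
  · obtain ⟨x, hx, rfl⟩ := mem_image.1 he
    exact hf_adj x hx
  · obtain ⟨x, hx, rfl⟩ := mem_image.1 he
    obtain ⟨x', hx', rfl⟩ := mem_image.1 he'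
    have hxx' : x ≠ x' := fun h => hne (h ▸ rfl)
    rcases Sym2.mem_iff.1 hv with h | h <;> rcases Sym2.mem_iff.1 hv' with h' | h' <;>
      rw [h] at h'
    exacts [hxx' h', hf_out x' hx' (h' ▸ hx), hf_out x hx (h' ▸ hx'), hxx' (hf_inj hx hx' h')]

theorem card_image_mk_of_forall_notMem {α : Type*} [DecidableEq α] {P : Finset α} {f : α → α}
    (hf_out : ∀ x ∈ P, f x ∉ P) :
    #(P.image fun x => s(x, f x)) = #P :=
  card_image_of_injOn fun x hx x' hx' h => by
    rcases Sym2.eq_iff.1 h with ⟨h, -⟩ | ⟨h, -⟩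
    · exact h
    · exact absurd (h ▸ hx : f x' ∈ P) (hf_out x' hx')

section ResidualGraph

variable {α : Type*} {G : SimpleGraph α} {M : ℕ → Finset (Sym2 α)} {k : ℕ}

theorem resid_adj {i : ℕ} {u w : α} :
    (resid G M i).Adj u w ↔ G.Adj u w ∧ ∀ j < i, s(u, w) ∉ M j := by
  simp [resid]

theorem resid_anti : Antitone (resid G M) := fun _ _ hij =>
  SimpleGraph.deleteEdges_anti <| Set.biUnion_mono (Set.Iio_subset_Iio hij) fun _ _ => le_rfl

theorem resid_le (i : ℕ) : resid G M i ≤ G :=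
  SimpleGraph.deleteEdges_le _

theorem IsMatchingE.notMem_of_lt {i j : ℕ} (hMi : IsMatchingE (resid G M i) (M i))
    {e : Sym2 α} (he : e ∈ M i) (hji : j < i) : e ∉ M j := fun hej => by
  have := hMi.1 he
  rw [resid, SimpleGraph.edgeSet_deleteEdges] at this
  exact this.2 (Set.mem_biUnion (Set.mem_Iio.2 hji) (mem_coe.2 hej))

theorem eq_of_mem_of_isMatchingE_resid {i j : ℕ} (hM : ∀ i < k, IsMatchingE (resid G M i) (M i))
    (hi : i < k) (hj : j < k) {e : Sym2 α} (hei : e ∈ M i) (hej : e ∈ M j) : i = j := by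
  rcases lt_trichotomy i j with h | h | h
  · exact absurd hei ((hM j hj).notMem_of_lt hej h)
  · exact h
  · exact absurd hej ((hM i hi).notMem_of_lt hei h)

theorem card_filter_resid_adj_add_card_filter_matched_le [DecidableEq α]
    (hM : ∀ i < k, IsMatchingE (resid G M i) (M i)) (S : Finset α) (v : α) :
    #{w ∈ S | (resid G M k).Adj v w} + #{i ∈ range k | ∃ w ∈ S, s(v, w) ∈ M i} ≤
      #{w ∈ S | G.Adj v w} := by
  have hmatched : #{i ∈ range k | ∃ w ∈ S, s(v, w) ∈ M i} ≤
      #{w ∈ {w ∈ S | G.Adj v w} | ¬(resid G M k).Adj v w} := by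
    refine card_le_card_of_forall_subsingleton (fun i w => s(v, w) ∈ M i) ?_ ?_
    · simp only [mem_filter, mem_range]
      rintro i ⟨hik, w, hw, hvw⟩
      refine ⟨w, ⟨⟨hw, resid_le i ((hM i hik).1 hvw)⟩, fun h => ?_⟩, hvw⟩
      exact (resid_adj.1 h).2 i hik hvw
    · rintro w - i ⟨hi, hvw⟩ j ⟨hj, hvw'⟩
      exact eq_of_mem_of_isMatchingE_resid hM (mem_range.1 (mem_filter.1 hi).1)
        (mem_range.1 (mem_filter.1 hj).1) hvw hvw'
  have hresid : {w ∈ {w ∈ S | G.Adj v w} | (resid G M k).Adj v w} =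
      {w ∈ S | (resid G M k).Adj v w} := by
    rw [filter_filter]
    exact filter_congr fun w _ => and_iff_right_of_imp fun h => resid_le k h
  have := card_filter_add_card_filter_not ((resid G M k).Adj v) (s := {w ∈ S | G.Adj v w})
  rw [hresid] at this
  omega

end ResidualGraph

namespace IsMatchingE

variable {H : SimpleGraph V} {M : Finset (Sym2 V)}

theorem two_mul_card_add_card_filter_unmatched_le (hM : IsMatchingE H M) (S : Finset V) :
    2 * #M + #{v ∈ S | ∀ e ∈ M, v ∉ e} ≤ Fintype.card V := by
  have hcovered : #(M.biUnion Sym2.toFinset) = 2 * #M := by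
    rw [card_biUnion fun e he f hf hne => disjoint_left.2 fun v hve hvf =>
      hM.2 he hf hne v (Sym2.mem_toFinset.1 hve) (Sym2.mem_toFinset.1 hvf)]
    rw [sum_congr rfl fun e he => Sym2.card_toFinset_of_not_isDiag e
      (H.not_isDiag_of_mem_edgeSet (hM.1 he)), sum_const, smul_eq_mul, mul_comm]
  have hdisj : Disjoint (M.biUnion Sym2.toFinset) {v ∈ S | ∀ e ∈ M, v ∉ e} := by
    simp only [disjoint_left, mem_biUnion, Sym2.mem_toFinset, mem_filter]
    rintro v ⟨e, he, hve⟩ ⟨-, hv⟩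
    exact hv e he hve
  rw [← hcovered, ← card_union_of_disjoint hdisj]
  exact card_le_univ _

theorem card_filter_matched_compl_add_card_le (hM : IsMatchingE H M) (S : Finset V) :
    #{v ∈ S | ∃ w ∉ S, s(v, w) ∈ M} + #S ≤ Fintype.card V := by
  have hinj : #{v ∈ S | ∃ w ∉ S, s(v, w) ∈ M} ≤ #(univ \ S) := by
    refine card_le_card_of_forall_subsingleton (fun v w => s(v, w) ∈ M) ?_ ?_
    · simp only [mem_filter, mem_sdiff, mem_univ, true_and]
      exact fun v ⟨_, w, hw, hvw⟩ => ⟨w, hw, hvw⟩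
    · intro w _ v ⟨_, hv⟩ v' ⟨_, hv'⟩
      exact Sym2.congr_left.1
        (hM.eq_of_mem_of_mem hv hv' (Sym2.mem_mk_right v w) (Sym2.mem_mk_right v' w))
  rw [card_univ_sdiff] at hinj
  have := card_le_univ S
  omega

theorem card_add_card_filter_not_matched_within_add_le (hM : IsMatchingE H M) (S : Finset V) :
    #S + #{v ∈ S | ¬∃ w ∈ S, s(v, w) ∈ M} + 2 * #M ≤ 2 * Fintype.card V := by
  have hsplit : {v ∈ S | ¬∃ w ∈ S, s(v, w) ∈ M} ⊆
      {v ∈ S | ∀ e ∈ M, v ∉ e} ∪ {v ∈ S | ∃ w ∉ S, s(v, w) ∈ M} := by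
    intro v
    simp only [mem_filter, mem_union]
    rintro ⟨hvS, hv⟩
    by_contra! h
    obtain ⟨e, he, hve⟩ := h.1 hvS
    obtain ⟨w, rfl⟩ := Sym2.mem_iff_exists.1 hve
    by_cases hw : w ∈ S
    · exact hv ⟨w, hw, he⟩
    · exact h.2 hvS w hw he
  have := (card_le_card hsplit).trans (card_union_le _ _)
  have := hM.two_mul_card_add_card_filter_unmatched_le S
  have := hM.card_filter_matched_compl_add_card_le S
  omega

end IsMatchingE

theorem mem_inducedEdges {H : SimpleGraph V} {S : Finset V} {e : Sym2 V} :
    e ∈ inducedEdges H S ↔ e ∈ H.edgeSet ∧ ∀ v ∈ e, v ∈ S := by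
  rw [inducedEdges, mem_filter, SimpleGraph.mem_edgeFinset]

theorem mk_mem_inducedEdges {H : SimpleGraph V} {S : Finset V} {u w : V} :
    s(u, w) ∈ inducedEdges H S ↔ H.Adj u w ∧ u ∈ S ∧ w ∈ S := by
  simp [mem_inducedEdges, or_imp, forall_and]

theorem IsMaxIndepF.card_le_card_add_card_inducedEdges {H : SimpleGraph V} {I : Finset V}
    (hI : IsMaxIndepF H I) (S : Finset V) : #S ≤ #I + #(inducedEdges H S) := by
  set R := (inducedEdges H S).image fun e => e.out.1
  have hindep : IsIndepF H (S \ R) := by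
    simp only [IsIndepF, mem_sdiff]
    intro u ⟨huS, huR⟩ w ⟨hwS, hwR⟩ huw
    have hR : (s(u, w)).out.1 ∈ R :=
      mem_image_of_mem _ (mk_mem_inducedEdges.2 ⟨huw, huS, hwS⟩)
    rcases Sym2.mem_iff.1 (Sym2.out_fst_mem s(u, w)) with h | h <;> rw [h] at hR
    exacts [huR hR, hwR hR]
  calc #S ≤ #(S \ R) + #R := card_le_card_sdiff_add_card
    _ ≤ #I + #(inducedEdges H S) := add_le_add (hI.2 _ hindep) card_image_le

theorem two_mul_card_inducedEdges (H : SimpleGraph V) (S : Finset V) :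
    2 * #(inducedEdges H S) = ∑ v ∈ S, #{w ∈ S | H.Adj v w} := by
  have hedges : ∀ v ∈ S, #{w ∈ S | H.Adj v w} = #{e ∈ inducedEdges H S | v ∈ e} := by
    intro v hv
    rw [← card_image_of_injective _ (fun _ _ => Sym2.congr_right.1 : (s(v, ·)).Injective)]
    congr 1
    ext e
    simp only [mem_image, mem_filter]
    constructor
    · rintro ⟨w, ⟨hw, hvw⟩, rfl⟩
      exact ⟨mk_mem_inducedEdges.2 ⟨hvw, hv, hw⟩, Sym2.mem_mk_left v w⟩
    · rintro ⟨he, hve⟩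
      obtain ⟨w, rfl⟩ := Sym2.mem_iff_exists.1 hve
      obtain ⟨hvw, -, hw⟩ := mk_mem_inducedEdges.1 he
      exact ⟨w, ⟨hw, hvw⟩, rfl⟩
  have hends : ∀ e ∈ inducedEdges H S, #{v ∈ S | v ∈ e} = 2 := by
    intro e he
    obtain ⟨he, heS⟩ := mem_inducedEdges.1 he
    rw [← Sym2.card_toFinset_of_not_isDiag e (H.not_isDiag_of_mem_edgeSet he)]
    congr 1
    ext v
    simp only [mem_filter, Sym2.mem_toFinset]
    exact ⟨And.right, fun hv => ⟨heS v hv, hv⟩⟩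
  rw [sum_congr rfl hedges]
  have := sum_card_bipartiteAbove_eq_sum_card_bipartiteBelow (s := S) (t := inducedEdges H S)
    (r := fun v e => v ∈ e)
  simp only [bipartiteAbove, bipartiteBelow] at this
  rw [this, sum_congr rfl hends, sum_const, smul_eq_mul, mul_comm]

namespace SimpleGraph

theorem exists_injective_mem_neighborFinset_disjSum (H : SimpleGraph V) {X : Finset V} {d : ℕ}
    (hX : ∀ S ⊆ X, #S ≤ #(S.biUnion fun x => H.neighborFinset x) + d) :
    ∃ g : X → V ⊕ Fin d, g.Injective ∧
      ∀ x : X, g x ∈ (H.neighborFinset x).disjSum univ := by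
  refine (all_card_le_biUnion_card_iff_exists_injective _).1 fun s => ?_
  obtain rfl | ⟨x₀, hx₀⟩ := s.eq_empty_or_nonempty
  · simp
  have hs : (s.biUnion fun x => (H.neighborFinset x).disjSum (univ : Finset (Fin d))) =
      ((s.map (.subtype _)).biUnion fun x => H.neighborFinset x).disjSum univ := by
    ext (y | j) <;> simp
    exact ⟨x₀, x₀.2, hx₀⟩
  rw [hs, card_disjSum, card_univ, Fintype.card_fin, ← card_map (.subtype _)]
  exact hX _ (by simp +contextual [subset_iff])

theorem exists_injOn_adj_of_card_le_card_biUnion_add (H : SimpleGraph V) {X : Finset V} {d : ℕ}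
    (hX : ∀ S ⊆ X, #S ≤ #(S.biUnion fun x => H.neighborFinset x) + d) :
    ∃ P ⊆ X, #X ≤ #P + d ∧
      ∃ f : V → V, Set.InjOn f P ∧ ∀ x ∈ P, H.Adj x (f x) := by
  obtain ⟨g, hg_inj, hg⟩ := H.exists_injective_mem_neighborFinset_disjSum hX
  let f : V → V := fun v => if h : v ∈ X then (g ⟨v, h⟩).elim id fun _ => v else v
  have hf : ∀ x : X, (g x).isLeft → g x = .inl (f x) ∧ H.Adj x (f x) := by
    intro x hx
    obtain ⟨y, hy⟩ := Sum.isLeft_iff.1 hx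
    have := hg x
    simp only [hy, inl_mem_disjSum, mem_neighborFinset] at this
    simp [f, hy, this]
  refine ⟨({x | (g x).isLeft} : Finset X).map (.subtype _), by simp +contextual [subset_iff], ?_,
    f, ?_, ?_⟩
  · have hright : #{x | ¬(g x).isLeft} ≤ d := by
      refine (card_le_card_of_injOn g (t := univ.map .inr) ?_ hg_inj.injOn).trans (by simp)
      intro x hx
      simp only [coe_filter, mem_univ, true_and, Bool.not_eq_true, Sum.isLeft_eq_false] at hx
      obtain ⟨j, hj⟩ := Sum.isRight_iff.1 hx
      simp [hj]
    rw [card_map, ← Fintype.card_coe X, ← card_univ]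
    have := card_filter_add_card_filter_not (s := (univ : Finset X)) (fun x => (g x).isLeft)
    omega
  · simp only [coe_map, Function.Embedding.subtype_apply, Set.InjOn, Set.mem_image,
      mem_coe, mem_filter, mem_univ, true_and]
    rintro _ ⟨x, hx, rfl⟩ _ ⟨x', hx', rfl⟩ hxx'
    exact congrArg Subtype.val (hg_inj (by rw [(hf x hx).1, (hf x' hx').1, hxx']))
  · simp only [mem_map, mem_filter, mem_univ, true_and, Function.Embedding.subtype_apply]
    rintro _ ⟨x, hx, rfl⟩
    exact (hf x hx).2

theorem Coloring.isIndepF_union_sdiff_biUnion_neighborFinset {H : SimpleGraph V}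
    (c : H.Coloring (Fin 2)) {S : Finset V} (hS : ∀ x ∈ S, c x = 0) :
    IsIndepF H (S ∪ ((univ.filter (c · ≠ 0)) \ S.biUnion fun x => H.neighborFinset x)) := by
  set T := (univ.filter (c · ≠ 0)) \ S.biUnion fun x => H.neighborFinset x
  have hT : ∀ y ∈ T, c y = 1 :=
    fun y hy => Fin.eq_one_of_ne_zero _ (mem_filter.1 (mem_sdiff.1 hy).1).2
  have hST : ∀ x ∈ S, ∀ y ∈ T, ¬H.Adj x y := fun x hx y hy hxy =>
    (mem_sdiff.1 hy).2 (mem_biUnion.2 ⟨x, hx, (mem_neighborFinset ..).2 hxy⟩)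
  intro u hu w hw huw
  rcases mem_union.1 hu with hu | hu <;> rcases mem_union.1 hw with hw | hw
  exacts [c.valid huw ((hS u hu).trans (hS w hw).symm), hST u hu w hw huw,
    hST w hw u hu huw.symm, c.valid huw ((hT u hu).trans (hT w hw).symm)]

theorem Colorable.exists_isIndepF_card_add_card_ge {H : SimpleGraph V} (hH : H.Colorable 2)
    {M : Finset (Sym2 V)} (hM : IsMaxMatchingE H M) :
    ∃ J, IsIndepF H J ∧ Fintype.card V ≤ #J + #M := by
  obtain ⟨c⟩ := hH
  set X : Finset V := {v | c v = 0}
  set Y : Finset V := {v | c v ≠ 0}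
  let N : Finset V → Finset V := fun S => S.biUnion fun x => H.neighborFinset x
  have hXY : #X + #Y = Fintype.card V := card_filter_add_card_filter_not _
  have hX : ∀ x ∈ X, c x = 0 := fun x hx => (mem_filter.1 hx).2
  have hNY : ∀ S ⊆ X, N S ⊆ Y := by
    intro S hS y hy
    obtain ⟨x, hx, hxy⟩ := mem_biUnion.1 hy
    exact mem_filter.2
      ⟨mem_univ y, hX x (hS hx) ▸ (c.valid ((mem_neighborFinset ..).1 hxy)).symm⟩
  -- Hall's condition for `X` fails by at most the maximal deficiency `#S₀ - #(N S₀)`, while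
  -- `S₀ ∪ (Y \ N S₀)` is independent of size `#Y + (#S₀ - #(N S₀))`.
  obtain ⟨S₀, hS₀X, hS₀⟩ := X.powerset.exists_max_image (fun S => (#S : ℤ) - #(N S))
    ⟨∅, empty_mem_powerset X⟩
  rw [mem_powerset] at hS₀X
  have hNS₀ : #(N S₀) ≤ #S₀ := by
    have := hS₀ ∅ (empty_mem_powerset X)
    simp only [N, card_empty, biUnion_empty, Nat.cast_zero] at *
    omega
  obtain ⟨P, hPX, hP, f, hf_inj, hf_adj⟩ := H.exists_injOn_adj_of_card_le_card_biUnion_add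
    (d := #S₀ - #(N S₀)) fun S hS => by
      have := hS₀ S (mem_powerset.2 hS)
      simp only [N] at *
      omega
  have hf_out : ∀ x ∈ P, f x ∉ P := fun x hx hfx =>
    c.valid (hf_adj x hx) ((hX x (hPX hx)).trans (hX _ (hPX hfx)).symm)
  have hmatching := hM.2 _ (isMatchingE_image_mk_of_injOn hf_inj hf_out hf_adj)
  rw [card_image_mk_of_forall_notMem hf_out] at hmatching
  refine ⟨S₀ ∪ (Y \ N S₀), c.isIndepF_union_sdiff_biUnion_neighborFinset fun x hx =>
    hX x (hS₀X hx), ?_⟩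
  have hdisj : Disjoint S₀ (Y \ N S₀) := Finset.disjoint_left.2 fun x hx hy =>
    (mem_filter.1 (mem_sdiff.1 hy).1).2 (hX x (hS₀X hx))
  rw [card_union_of_disjoint hdisj, card_sdiff_of_subset (hNY S₀ hS₀X)]
  have := card_le_card (hNY S₀ hS₀X)
  omega

end SimpleGraph

section IteratedMatchings

variable {G : SimpleGraph V} {M : ℕ → Finset (Sym2 V)} {k : ℕ}

theorem card_add_card_filter_not_matched_within_le (hG : G.Colorable 2) {i : ℕ}
    (hMi : IsMaxMatchingE (resid G M i) (M i)) (hik : i ≤ k) {I : Finset V}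
    (hI : IsMaxIndepF (resid G M k) I) (S : Finset V) :
    #S + #{v ∈ S | ¬∃ w ∈ S, s(v, w) ∈ M i} ≤ 2 * #I := by
  obtain ⟨J, hJ, hJcard⟩ := (hG.mono_left (resid_le i)).exists_isIndepF_card_add_card_ge hMi
  have := hI.2 J (hJ.anti (resid_anti hik))
  have := hMi.1.card_add_card_filter_not_matched_within_add_le S
  omega

theorem two_mul_card_inducedEdges_resid_add_le (hG : G.Colorable 2)
    (hM : ∀ i < k, IsMaxMatchingE (resid G M i) (M i)) {I : Finset V}
    (hI : IsMaxIndepF (resid G M k) I) {S : Finset V} (hS : KDepSet G k S) :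
    2 * #(inducedEdges (resid G M k) S) + k * #S ≤ 2 * k * #I := by
  have hvertices : 2 * #(inducedEdges (resid G M k) S) +
      ∑ v ∈ S, #{i ∈ range k | ∃ w ∈ S, s(v, w) ∈ M i} ≤ k * #S := by
    rw [two_mul_card_inducedEdges, ← sum_add_distrib, mul_comm, ← smul_eq_mul]
    exact sum_le_card_nsmul _ _ _ fun v hv =>
      (card_filter_resid_adj_add_card_filter_matched_le (fun i hi => (hM i hi).1) S v).trans
        (hS v hv)
  have hswap := sum_card_bipartiteAbove_eq_sum_card_bipartiteBelow (s := S) (t := range k)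
    (r := fun v i => ∃ w ∈ S, s(v, w) ∈ M i)
  simp only [bipartiteAbove, bipartiteBelow] at hswap
  have hmatchings : ∑ i ∈ range k, 2 * #S ≤
      ∑ i ∈ range k, (2 * #I + #{v ∈ S | ∃ w ∈ S, s(v, w) ∈ M i}) := by
    refine sum_le_sum fun i hi => ?_
    have := card_add_card_filter_not_matched_within_le hG (hM i (mem_range.1 hi))
      (mem_range.1 hi).le hI S
    have := card_filter_add_card_filter_not (s := S) fun v => ∃ w ∈ S, s(v, w) ∈ M i
    omega
  simp only [sum_add_distrib, sum_const, card_range, smul_eq_mul] at hmatchings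
  rw [hswap] at hvertices
  linarith

end IteratedMatchings

theorem stmt7_general (G : SimpleGraph V) (hG : G.Colorable 2) (k : ℕ)
    (M : ℕ → Finset (Sym2 V)) (hM : ∀ i < k, IsMaxMatchingE (resid G M i) (M i))
    (I : Finset V) (hI : IsMaxIndepF (resid G M k) I)
    (Istar : Finset V) (hIstar : IsMaxKDep G k Istar) :
    (I.card : ℝ) ≥ (1/2 + 1/(2*(k+1))) * Istar.card := by
  have hdelete := hI.card_le_card_add_card_inducedEdges Istar
  have hcount := two_mul_card_inducedEdges_resid_add_le hG hM hI hIstar.1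
  have hcombined : ((k : ℝ) + 2) * Istar.card ≤ 2 * (k + 1) * I.card := by
    have : (k + 2) * #Istar ≤ 2 * (k + 1) * #I := by linarith
    exact_mod_cast this
  calc (1/2 + 1/(2*(k+1))) * (Istar.card : ℝ) = (k + 2) * Istar.card / (2 * (k + 1)) := by
        field_simp; ring
    _ ≤ I.card := by rw [div_le_iff₀ (by positivity)]; linarith

theorem stmt7 (G : SimpleGraph V) (hG : G.Colorable 2) (k : ℕ) (hk : 1 ≤ k)
    (M : ℕ → Finset (Sym2 V)) (hM : ∀ i < k, IsMaxMatchingE (resid G M i) (M i))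
    (I : Finset V) (hI : IsMaxIndepF (resid G M k) I)
    (Istar : Finset V) (hIstar : IsMaxKDep G k Istar) :
    (I.card : ℝ) ≥ (1/2 + 1/(2*(k+1))) * Istar.card :=
  stmt7_general G hG k M hM I hI Istar hIstar
end
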